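/- Let X be a matrix on ℂ^{d_{A'}}⊗ℂ^{d_{B'}} with trace norm ‖X‖₁ = 1, and let γ be the density matrix on ℂ²⊗ℂ²⊗ℂ^{d_{A'}}⊗ℂ^{d_{B'}} (factors A,B,A',B') given by γ = (1/2)(|00⟩⟨00|⊗√(XX†) + |00⟩⟨11|⊗X + |11⟩⟨00|⊗X† + |11⟩⟨11|⊗√(X†X)). Let Γ denote the partial transpose taken over the factors B and B'. If (√(XX†))^{Γ'} and (√(X†X))^{Γ'} are positive semidefinite, where Γ' is the partial transpose over B' alone, then ‖γ^{Γ}‖₁ = 1 + ‖X^{Γ'}‖₁; equivalently the log-negativity of γ equals log₂(1 + ‖X^{Γ'}‖₁). -/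

import Mathlib

open Matrix Kronecker BigOperators
open scoped ComplexOrder Classical

/-- Total matrix square root: `PosSemidef.sqrt` on positive semidefinite matrices,
junk value `0` otherwise. -/
noncomputable def sqrtm {n : Type*} [Fintype n] [DecidableEq n] (M : Matrix n n ℂ) :
    Matrix n n ℂ :=
  if h : M.PosSemidef then
    (h.1.eigenvectorUnitary : Matrix n n ℂ) *
      diagonal (fun i => ((Real.sqrt (h.1.eigenvalues i) : ℝ) : ℂ)) *
      (star h.1.eigenvectorUnitary : Matrix n n ℂ)
  else 0

/-- The trace norm `‖X‖₁ = Tr √(X†X)`. -/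
noncomputable def traceNorm {n : Type*} [Fintype n] [DecidableEq n] (X : Matrix n n ℂ) : ℝ :=
  ((sqrtm (Xᴴ * X)).trace).re

/-- Partial transpose over the second factor of a matrix on a tensor product of
two spaces (the transpose `Γ'` over `B'` alone). -/
def ptransposeSnd {α β : Type*} (M : Matrix (α × β) (α × β) ℂ) : Matrix (α × β) (α × β) ℂ :=
  Matrix.of fun x y => M (x.1, y.2) (y.1, x.2)

/-- Partial transpose over the factors `B` and `B'` of a matrix on
`(ℂ²_A ⊗ ℂ²_B) ⊗ (ℂ^{d_{A'}}_{A'} ⊗ ℂ^{d_{B'}}_{B'})`. -/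
def ptransposeBBp {α β : Type*}
    (M : Matrix ((Fin 2 × Fin 2) × (α × β)) ((Fin 2 × Fin 2) × (α × β)) ℂ) :
    Matrix ((Fin 2 × Fin 2) × (α × β)) ((Fin 2 × Fin 2) × (α × β)) ℂ :=
  Matrix.of fun x y =>
    M ((x.1.1, y.1.2), (x.2.1, y.2.2)) ((y.1.1, x.1.2), (y.2.1, x.2.2))

/-- The private bit in `X`-form:
`γ = (1/2)(|00⟩⟨00|⊗√(XX†) + |00⟩⟨11|⊗X + |11⟩⟨00|⊗X† + |11⟩⟨11|⊗√(X†X))`. -/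
noncomputable def pbitX {dA dB : ℕ} (X : Matrix (Fin dA × Fin dB) (Fin dA × Fin dB) ℂ) :
    Matrix ((Fin 2 × Fin 2) × (Fin dA × Fin dB)) ((Fin 2 × Fin 2) × (Fin dA × Fin dB)) ℂ :=
  ((1 : ℂ) / 2) •
    (Matrix.single ((0 : Fin 2), (0 : Fin 2)) ((0 : Fin 2), (0 : Fin 2)) (1 : ℂ) ⊗ₖ
        sqrtm (X * Xᴴ) +
      Matrix.single ((0 : Fin 2), (0 : Fin 2)) ((1 : Fin 2), (1 : Fin 2)) (1 : ℂ) ⊗ₖ X +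
      Matrix.single ((1 : Fin 2), (1 : Fin 2)) ((0 : Fin 2), (0 : Fin 2)) (1 : ℂ) ⊗ₖ Xᴴ +
      Matrix.single ((1 : Fin 2), (1 : Fin 2)) ((1 : Fin 2), (1 : Fin 2)) (1 : ℂ) ⊗ₖ
        sqrtm (Xᴴ * X))

/-! ### Auxiliary lemmas -/

open Polynomial in
lemma aux_reflect_reflect {R : Type*} [Semiring R] (N : ℕ) (f : R[X]) :
    reflect N (reflect N f) = f := by
  ext i; rw [coeff_reflect, coeff_reflect, revAt_invol]

open Polynomial in
lemma aux_charpoly_mul_comm {n : Type*} [Fintype n] [DecidableEq n] (A B : Matrix n n ℂ) :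
    (A * B).charpoly = (B * A).charpoly := by
  have hrev : (A * B).charpolyRev = (B * A).charpolyRev := by
    unfold Matrix.charpolyRev
    rw [Matrix.map_mul, ← smul_mul_assoc, Matrix.det_one_sub_mul_comm, mul_smul_comm,
      ← Matrix.map_mul]
  have h1 := Matrix.reverse_charpoly (A * B)
  have h2 := Matrix.reverse_charpoly (B * A)
  unfold Polynomial.reverse at h1 h2
  rw [Matrix.charpoly_natDegree_eq_dim] at h1 h2
  calc (A * B).charpoly = reflect (Fintype.card n) (reflect (Fintype.card n) (A*B).charpoly) :=
        (aux_reflect_reflect _ _).symm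
    _ = reflect (Fintype.card n) (reflect (Fintype.card n) (B*A).charpoly) := by
        rw [h1, h2, hrev]
    _ = (B * A).charpoly := aux_reflect_reflect _ _

open Polynomial in
lemma aux_charpoly_diagonal {n : Type*} [Fintype n] [DecidableEq n] (d : n → ℂ) :
    (Matrix.diagonal d).charpoly = ∏ i, (X - C (d i)) := by
  rw [Matrix.charpoly]
  have : (Matrix.diagonal d).charmatrix = Matrix.diagonal (fun i => (X : ℂ[X]) - C (d i)) := by
    refine Matrix.ext fun i j => ?_
    by_cases h : i = j
    · subst h; simp [charmatrix_apply_eq, Matrix.diagonal_apply_eq]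
    · simp [charmatrix_apply_ne _ _ _ h, Matrix.diagonal_apply_ne _ h]
  rw [this, Matrix.det_diagonal]

open Polynomial in
lemma aux_charpoly_isHermitian {n : Type*} [Fintype n] [DecidableEq n] {A : Matrix n n ℂ}
    (hA : A.IsHermitian) :
    A.charpoly = ∏ i, (X - C ((RCLike.ofReal (hA.eigenvalues i) : ℂ))) := by
  exact hA.charpoly_eq

open scoped MatrixOrder in
lemma sqrtm_of_posSemidef {n : Type*} [Fintype n] [DecidableEq n] {M : Matrix n n ℂ}
    (h : M.PosSemidef) : sqrtm M = CFC.sqrt M := by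
  rw [CFC.sqrt_eq_cfc, cfc_nnreal_eq_real _ M, h.1.cfc_eq, sqrtm, dif_pos h]
  simp only [IsHermitian.cfc, Unitary.conjStarAlgAut_apply, Function.comp_def, Real.coe_sqrt,
    Real.coe_toNNReal', max_eq_left (h.eigenvalues_nonneg _)]
  rfl

open scoped MatrixOrder in
lemma sqrtm_posSemidef {n : Type*} [Fintype n] [DecidableEq n] {M : Matrix n n ℂ}
    (h : M.PosSemidef) : (sqrtm M).PosSemidef := by
  rw [sqrtm_of_posSemidef h]; exact (CFC.sqrt_nonneg M).posSemidef

open scoped MatrixOrder in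
lemma sqrtm_mul_self {n : Type*} [Fintype n] [DecidableEq n] {M : Matrix n n ℂ}
    (h : M.PosSemidef) : sqrtm M * sqrtm M = M := by
  rw [sqrtm_of_posSemidef h]; exact CFC.sqrt_mul_sqrt_self M h.nonneg

open scoped MatrixOrder in
lemma sqrtm_eq {n : Type*} [Fintype n] [DecidableEq n] {M S : Matrix n n ℂ}
    (hS : S.PosSemidef) (hM : M.PosSemidef) (h : S * S = M) : sqrtm M = S := by
  rw [sqrtm_of_posSemidef hM]
  exact (CFC.sqrt_eq_iff M S hM.nonneg hS.nonneg).mpr h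

lemma trace_sqrtm {n : Type*} [Fintype n] [DecidableEq n] {M : Matrix n n ℂ}
    (h : M.PosSemidef) :
    (sqrtm M).trace = ∑ i, (RCLike.ofReal (Real.sqrt (h.1.eigenvalues i)) : ℂ) := by
  rw [sqrtm, dif_pos h]
  rw [Matrix.trace_mul_cycle, Unitary.coe_star_mul_self, one_mul, Matrix.trace_diagonal]
  rfl

open Polynomial in
lemma trace_sqrtm_swap {n : Type*} [Fintype n] [DecidableEq n] (M : Matrix n n ℂ) :
    (sqrtm (Mᴴ * M)).trace = (sqrtm (M * Mᴴ)).trace := by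
  have h1 := Matrix.posSemidef_conjTranspose_mul_self M
  have h2 := Matrix.posSemidef_self_mul_conjTranspose M
  set a := h1.1.eigenvalues with ha
  set b := h2.1.eigenvalues with hb
  have hcp : ∏ i, (X - C ((RCLike.ofReal (a i) : ℂ)))
      = ∏ i, (X - C ((RCLike.ofReal (b i) : ℂ))) := by
    rw [← aux_charpoly_isHermitian h1.1, ← aux_charpoly_isHermitian h2.1]
    exact aux_charpoly_mul_comm Mᴴ M
  have hprod : ∀ (c : n → ℝ),
      ∏ i, (X - C ((RCLike.ofReal (c i) : ℂ)))
        = ((Finset.univ.val.map (fun i => (RCLike.ofReal (c i) : ℂ))).map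
            (fun r => X - C r)).prod := by
    intro c
    rw [Multiset.map_map]
    rfl
  have hmsC : Finset.univ.val.map (fun i => (RCLike.ofReal (a i) : ℂ))
      = Finset.univ.val.map (fun i => (RCLike.ofReal (b i) : ℂ)) := by
    have := congrArg Polynomial.roots hcp
    rwa [hprod a, hprod b, Polynomial.roots_multiset_prod_X_sub_C,
      Polynomial.roots_multiset_prod_X_sub_C] at this
  have hmsR : Finset.univ.val.map a = Finset.univ.val.map b := by
    apply Multiset.map_injective (RCLike.ofReal_injective (K := ℂ))
    rwa [Multiset.map_map, Multiset.map_map]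
  rw [trace_sqrtm h1, trace_sqrtm h2, ← ha, ← hb]
  have hsum : ∀ (c : n → ℝ),
      (∑ i, (RCLike.ofReal (Real.sqrt (c i)) : ℂ))
        = ((Finset.univ.val.map c).map (fun r => (RCLike.ofReal (Real.sqrt r) : ℂ))).sum := by
    intro c
    rw [Multiset.map_map]
    rfl
  rw [hsum a, hsum b, hmsR]

lemma trace_real_of_isHermitian {n : Type*} [Fintype n] {T : Matrix n n ℂ}
    (hT : T.IsHermitian) : T.trace = ((T.trace.re : ℝ) : ℂ) := by
  have h : star T.trace = T.trace := by
    rw [← Matrix.trace_conjTranspose, hT.eq]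
  exact (Complex.conj_eq_iff_re.mp h).symm

lemma ptransposeSnd_conjT {α β : Type*} (M : Matrix (α × β) (α × β) ℂ) :
    ptransposeSnd Mᴴ = (ptransposeSnd M)ᴴ := by
  ext x y
  rfl

lemma trace_ptransposeSnd {α β : Type*} [Fintype α] [Fintype β]
    (M : Matrix (α × β) (α × β) ℂ) : (ptransposeSnd M).trace = M.trace := rfl

lemma conjTranspose_kron {α β : Type*} (A : Matrix α α ℂ) (B : Matrix β β ℂ) :
    (A ⊗ₖ B)ᴴ = Aᴴ ⊗ₖ Bᴴ := by
  ext x y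
  simp [Matrix.conjTranspose_apply, Matrix.kroneckerMap_apply, star_mul']

lemma stdBasisMatrix_conjT {α : Type*} [DecidableEq α] (i j : α) :
    (Matrix.single i j (1 : ℂ))ᴴ = Matrix.single j i (1 : ℂ) := by
  rw [Matrix.conjTranspose_single, star_one]

open scoped MatrixOrder in
lemma posSemidef_kron_stdBasis {ι m : Type*} [Fintype ι] [DecidableEq ι] [Fintype m]
    [DecidableEq m] (b : ι) {P : Matrix m m ℂ} (hP : P.PosSemidef) :
    (Matrix.single b b (1 : ℂ) ⊗ₖ P).PosSemidef := by
  have : Matrix.single b b (1 : ℂ) ⊗ₖ P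
      = (Matrix.single b b (1 : ℂ) ⊗ₖ CFC.sqrt P)ᴴ *
        (Matrix.single b b (1 : ℂ) ⊗ₖ CFC.sqrt P) := by
    rw [conjTranspose_kron, stdBasisMatrix_conjT, (CFC.sqrt_nonneg P).posSemidef.1.eq,
      ← Matrix.mul_kronecker_mul, Matrix.single_mul_single_same, one_mul, CFC.sqrt_mul_sqrt_self P hP.nonneg]
  rw [this]
  exact Matrix.posSemidef_conjTranspose_mul_self _

lemma posSemidef_half_smul {n : Type*} [Fintype n] {P : Matrix n n ℂ} (hP : P.PosSemidef) :
    (((1 : ℂ) / 2) • P).PosSemidef := by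
  · have h2 : (0 : ℂ) ≤ (1 : ℂ) / 2 := by
      rw [show ((1 : ℂ)/2) = (((1 : ℝ)/2 : ℝ) : ℂ) by push_cast; ring, Complex.zero_le_real]
      norm_num
    exact hP.smul h2

/-- Shorthand for standard basis matrices on `Fin 2 × Fin 2`. -/
def Eb (a b c d : Fin 2) : Matrix (Fin 2 × Fin 2) (Fin 2 × Fin 2) ℂ :=
  Matrix.single (a, b) (c, d) (1 : ℂ)

lemma Eb_conjT (a b c d : Fin 2) : (Eb a b c d)ᴴ = Eb c d a b :=
  stdBasisMatrix_conjT _ _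

lemma Eb_trace (a b : Fin 2) : (Eb a b a b).trace = 1 :=
  Matrix.trace_single_eq_same _ _

lemma stdmul (i j k l : Fin 2 × Fin 2) :
    Matrix.single i j (1:ℂ) * Matrix.single k l (1:ℂ)
      = if j = k then Matrix.single i l (1:ℂ) else 0 := by
  split
  · next h => subst h; rw [Matrix.single_mul_single_same, one_mul]
  · next h => exact Matrix.single_mul_single_of_ne (1:ℂ) i j k h (1:ℂ)

lemma kron4_mul_offdiag {n : Type*} [Fintype n] [DecidableEq n]
    (P₁ P₂ P₃ P₄ Q₁ Q₂ Q₃ Q₄ : Matrix n n ℂ) :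
    (Eb 0 0 0 0 ⊗ₖ P₁ + Eb 0 1 1 0 ⊗ₖ P₂ + Eb 1 0 0 1 ⊗ₖ P₃ + Eb 1 1 1 1 ⊗ₖ P₄) *
    (Eb 0 0 0 0 ⊗ₖ Q₁ + Eb 0 1 1 0 ⊗ₖ Q₂ + Eb 1 0 0 1 ⊗ₖ Q₃ + Eb 1 1 1 1 ⊗ₖ Q₄)
    = Eb 0 0 0 0 ⊗ₖ (P₁ * Q₁) + Eb 0 1 0 1 ⊗ₖ (P₂ * Q₃) + Eb 1 0 1 0 ⊗ₖ (P₃ * Q₂) +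
      Eb 1 1 1 1 ⊗ₖ (P₄ * Q₄) := by
  simp only [Eb, add_mul, mul_add, ← Matrix.mul_kronecker_mul, stdmul]
  simp (config := { decide := true }) only [if_true, if_false, Matrix.zero_kronecker,
    add_zero, zero_add, reduceIte]
  abel

lemma kron4_mul_diag {n : Type*} [Fintype n] [DecidableEq n]
    (P₁ P₂ P₃ P₄ Q₁ Q₂ Q₃ Q₄ : Matrix n n ℂ) :
    (Eb 0 0 0 0 ⊗ₖ P₁ + Eb 0 1 0 1 ⊗ₖ P₂ + Eb 1 0 1 0 ⊗ₖ P₃ + Eb 1 1 1 1 ⊗ₖ P₄) *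
    (Eb 0 0 0 0 ⊗ₖ Q₁ + Eb 0 1 0 1 ⊗ₖ Q₂ + Eb 1 0 1 0 ⊗ₖ Q₃ + Eb 1 1 1 1 ⊗ₖ Q₄)
    = Eb 0 0 0 0 ⊗ₖ (P₁ * Q₁) + Eb 0 1 0 1 ⊗ₖ (P₂ * Q₂) + Eb 1 0 1 0 ⊗ₖ (P₃ * Q₃) +
      Eb 1 1 1 1 ⊗ₖ (P₄ * Q₄) := by
  simp only [Eb, add_mul, mul_add, ← Matrix.mul_kronecker_mul, stdmul]
  simp (config := { decide := true }) only [if_true, if_false, Matrix.zero_kronecker,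
    add_zero, zero_add, reduceIte]

lemma ptransposeBBp_add {α β : Type*}
    (M N : Matrix ((Fin 2 × Fin 2) × (α × β)) ((Fin 2 × Fin 2) × (α × β)) ℂ) :
    ptransposeBBp (M + N) = ptransposeBBp M + ptransposeBBp N := by
  ext x y
  rfl

lemma ptransposeBBp_smul {α β : Type*} (c : ℂ)
    (M : Matrix ((Fin 2 × Fin 2) × (α × β)) ((Fin 2 × Fin 2) × (α × β)) ℂ) :
    ptransposeBBp (c • M) = c • ptransposeBBp M := by
  ext x y
  rfl

lemma ptransposeBBp_kron {α β : Type*} (a b c d : Fin 2)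
    (M : Matrix (α × β) (α × β) ℂ) :
    ptransposeBBp (Matrix.single (a, b) (c, d) (1 : ℂ) ⊗ₖ M)
      = Eb a d c b ⊗ₖ ptransposeSnd M := by
  refine Matrix.ext fun x y => ?_
  obtain ⟨⟨p, q⟩, r, s⟩ := x
  obtain ⟨⟨p', q'⟩, r', s'⟩ := y
  simp only [ptransposeBBp, ptransposeSnd, Eb, Matrix.of_apply, Matrix.kroneckerMap_apply,
    Matrix.single, Prod.mk.injEq]
  congr 1
  exact if_congr (by tauto) rfl rfl

/-- for a pbit in `X`-form with `‖X‖₁ = 1`, if the partial transposes (over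
`B'`) of `√(XX†)` and `√(X†X)` are positive semidefinite, then
`‖γ^Γ‖₁ = 1 + ‖X^{Γ'}‖₁`; equivalently `E_N(γ) = log₂(1 + ‖X^{Γ'}‖₁)`. -/
theorem logNegativity_pbitX {dA dB : ℕ}
    (X : Matrix (Fin dA × Fin dB) (Fin dA × Fin dB) ℂ)
    (hX : traceNorm X = 1)
    (h1 : (ptransposeSnd (sqrtm (X * Xᴴ))).PosSemidef)
    (h2 : (ptransposeSnd (sqrtm (Xᴴ * X))).PosSemidef) :
    traceNorm (ptransposeBBp (pbitX X)) = 1 + traceNorm (ptransposeSnd X) ∧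
    Real.logb 2 (traceNorm (ptransposeBBp (pbitX X))) =
      Real.logb 2 (1 + traceNorm (ptransposeSnd X)) := by
  set Y : Matrix (Fin dA × Fin dB) (Fin dA × Fin dB) ℂ := ptransposeSnd X with hYdef
  set A : Matrix (Fin dA × Fin dB) (Fin dA × Fin dB) ℂ := ptransposeSnd (sqrtm (X * Xᴴ))
    with hAdef
  set B : Matrix (Fin dA × Fin dB) (Fin dA × Fin dB) ℂ := ptransposeSnd (sqrtm (Xᴴ * X))
    with hBdef
  set N := ptransposeBBp (pbitX X) with hNdef
  have hN : N = ((1 : ℂ)/2) •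
      (Eb 0 0 0 0 ⊗ₖ A + Eb 0 1 1 0 ⊗ₖ Y + Eb 1 0 0 1 ⊗ₖ Yᴴ + Eb 1 1 1 1 ⊗ₖ B) := by
    rw [hNdef]
    unfold pbitX
    rw [ptransposeBBp_smul, ptransposeBBp_add, ptransposeBBp_add, ptransposeBBp_add,
      ptransposeBBp_kron, ptransposeBBp_kron, ptransposeBBp_kron, ptransposeBBp_kron,
      ptransposeSnd_conjT]
  have hNH : Nᴴ = N := by
    rw [hN, Matrix.conjTranspose_smul, Matrix.conjTranspose_add, Matrix.conjTranspose_add,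
      Matrix.conjTranspose_add, conjTranspose_kron, conjTranspose_kron, conjTranspose_kron,
      conjTranspose_kron, Eb_conjT, Eb_conjT, Eb_conjT, Eb_conjT, h1.1.eq, h2.1.eq,
      Matrix.conjTranspose_conjTranspose]
    have hs : star ((1 : ℂ) / 2) = (1 : ℂ) / 2 := by simp
    rw [hs]
    congr 1
    abel
  have hYYH := Matrix.posSemidef_self_mul_conjTranspose Y
  have hYHY := Matrix.posSemidef_conjTranspose_mul_self Y
  set S := ((1 : ℂ)/2) •
      (Eb 0 0 0 0 ⊗ₖ A + Eb 0 1 0 1 ⊗ₖ sqrtm (Y * Yᴴ) + Eb 1 0 1 0 ⊗ₖ sqrtm (Yᴴ * Y) +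
        Eb 1 1 1 1 ⊗ₖ B) with hSdef
  have hSpsd : S.PosSemidef := by
    refine posSemidef_half_smul ?_
    exact (((posSemidef_kron_stdBasis _ h1).add
      (posSemidef_kron_stdBasis _ (sqrtm_posSemidef hYYH))).add
      (posSemidef_kron_stdBasis _ (sqrtm_posSemidef hYHY))).add
      (posSemidef_kron_stdBasis _ h2)
  have hSS : S * S = Nᴴ * N := by
    rw [hNH, hN, hSdef, smul_mul_smul_comm, smul_mul_smul_comm, kron4_mul_diag,
      kron4_mul_offdiag, sqrtm_mul_self hYYH, sqrtm_mul_self hYHY]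
  have hsqrt : sqrtm (Nᴴ * N) = S :=
    sqrtm_eq hSpsd (Matrix.posSemidef_conjTranspose_mul_self N) hSS
  -- trace values
  have htA : A.trace = ((1 : ℝ) : ℂ) := by
    have e1 : (sqrtm (Xᴴ * X)).trace = ((1 : ℝ) : ℂ) := by
      have h := trace_real_of_isHermitian
        (sqrtm_posSemidef (Matrix.posSemidef_conjTranspose_mul_self X)).1
      rw [h, show (sqrtm (Xᴴ * X)).trace.re = traceNorm X from rfl, hX]
    rw [hAdef, trace_ptransposeSnd, ← trace_sqrtm_swap X, e1]
  have htB : B.trace = ((1 : ℝ) : ℂ) := by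
    have h := trace_real_of_isHermitian
      (sqrtm_posSemidef (Matrix.posSemidef_conjTranspose_mul_self X)).1
    rw [hBdef, trace_ptransposeSnd, h,
      show (sqrtm (Xᴴ * X)).trace.re = traceNorm X from rfl, hX]
  set r : ℝ := traceNorm Y with hrdef
  have htYHY : (sqrtm (Yᴴ * Y)).trace = ((r : ℝ) : ℂ) := by
    have h := trace_real_of_isHermitian (sqrtm_posSemidef hYHY).1
    rw [h, show (sqrtm (Yᴴ * Y)).trace.re = traceNorm Y from rfl]
  have htYYH : (sqrtm (Y * Yᴴ)).trace = ((r : ℝ) : ℂ) := by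
    rw [← trace_sqrtm_swap Y, htYHY]
  have hStrace : S.trace = (((1 + r : ℝ)) : ℂ) := by
    rw [hSdef, Matrix.trace_smul, Matrix.trace_add, Matrix.trace_add, Matrix.trace_add,
      Matrix.trace_kronecker, Matrix.trace_kronecker, Matrix.trace_kronecker,
      Matrix.trace_kronecker, Eb_trace, Eb_trace, Eb_trace, Eb_trace, one_mul, one_mul,
      one_mul, one_mul, htA, htB, htYHY, htYYH, smul_eq_mul]
    push_cast
    ring
  have hmain : traceNorm N = 1 + r := by
    show (sqrtm (Nᴴ * N)).trace.re = 1 + r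
    rw [hsqrt, hStrace, Complex.ofReal_re]
  exact ⟨hmain, by rw [hmain]⟩
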